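/- arXiv:1702.03750 — 8 statements merged into one kernel-verified Lean document; each statement's English description precedes it below -/
import Mathlib

section
/- Let n ≥ 2, let f be a real-valued function on the space of real n×n matrices that is differentiable at every point of SO(n), let Q ∈ SO(n), and let ε be a real number with 0 < ε ≤ 2/n. Then there exists a pair of indices (i,j) with 1 ≤ i < j ≤ n such that |⟨ProjGrad f(Q), Q δ_{i,j}⟩| ≥ ε · ‖ProjGrad f(Q)‖, where δ_{i,j} is the n×n matrix whose (j,i) entry is 1, whose (i,j) entry is −1, and all of whose other entries are 0. -/
open Matrix Real Filter Set

attribute [local instance] Matrix.frobeniusNormedAddCommGroup Matrix.frobeniusNormedSpace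

noncomputable def frobInner {n : ℕ} (A B : Matrix (Fin n) (Fin n) ℝ) : ℝ :=
  ∑ i, ∑ j, A i j * B i j

noncomputable def frobNorm {n : ℕ} (A : Matrix (Fin n) (Fin n) ℝ) : ℝ :=
  Real.sqrt (∑ i, ∑ j, (A i j) ^ 2)

def SOn (n : ℕ) : Set (Matrix (Fin n) (Fin n) ℝ) := {Q | Qᵀ * Q = 1 ∧ Q.det = 1}

noncomputable def grad {n : ℕ} (f : Matrix (Fin n) (Fin n) ℝ → ℝ)
    (Q : Matrix (Fin n) (Fin n) ℝ) : Matrix (Fin n) (Fin n) ℝ :=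
  Matrix.of fun k l => fderiv ℝ f Q (Matrix.single k l 1)

noncomputable def Lam {n : ℕ} (f : Matrix (Fin n) (Fin n) ℝ → ℝ)
    (Q : Matrix (Fin n) (Fin n) ℝ) : Matrix (Fin n) (Fin n) ℝ :=
  (1 / 2 : ℝ) • (Qᵀ * grad f Q - (grad f Q)ᵀ * Q)

noncomputable def projGrad {n : ℕ} (f : Matrix (Fin n) (Fin n) ℝ → ℝ)
    (Q : Matrix (Fin n) (Fin n) ℝ) : Matrix (Fin n) (Fin n) ℝ := Q * Lam f Q

noncomputable def givens {n : ℕ} (i j : Fin n) (θ : ℝ) : Matrix (Fin n) (Fin n) ℝ :=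
  Matrix.of fun k l =>
    if k = i ∧ l = i then Real.cos θ
    else if k = j ∧ l = j then Real.cos θ
    else if k = j ∧ l = i then Real.sin θ
    else if k = i ∧ l = j then -Real.sin θ
    else if k = l then 1 else 0

def deltaMat {n : ℕ} (i j : Fin n) : Matrix (Fin n) (Fin n) ℝ :=
  Matrix.of fun k l => if k = j ∧ l = i then 1 else if k = i ∧ l = j then -1 else 0

/-! Since `Q` is orthogonal, the Frobenius pairing is invariant under left multiplication by `Q`, so
`⟨ProjGrad f(Q), Q δᵢⱼ⟩ = ⟨Λ, δᵢⱼ⟩ = Λⱼᵢ - Λᵢⱼ = 2 Λⱼᵢ` and `‖ProjGrad f(Q)‖ = ‖Λ‖`, where `Λ` is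
skew-symmetric. The `n²` squared entries of `Λ` sum to `‖Λ‖²`, so the largest one satisfies
`‖Λ‖ ≤ n |Λⱼᵢ|`; it sits off the diagonal unless `Λ = 0`. Hence `ε ‖Λ‖ ≤ (2 / n) ‖Λ‖ ≤ 2 |Λⱼᵢ|`. -/

section Frobenius

variable {n : ℕ}

lemma frobInner_eq_trace (A B : Matrix (Fin n) (Fin n) ℝ) : frobInner A B = (Aᵀ * B).trace := by
  simp only [frobInner, trace, diag, mul_apply, transpose_apply]
  exact Finset.sum_comm

lemma frobInner_mul_left_of_transpose_mul_self {Q : Matrix (Fin n) (Fin n) ℝ} (hQ : Qᵀ * Q = 1)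
    (A B : Matrix (Fin n) (Fin n) ℝ) : frobInner (Q * A) (Q * B) = frobInner A B := by
  rw [frobInner_eq_trace, frobInner_eq_trace, transpose_mul, Matrix.mul_assoc,
    ← Matrix.mul_assoc Qᵀ, hQ, Matrix.one_mul]

lemma frobNorm_eq_sqrt_frobInner (A : Matrix (Fin n) (Fin n) ℝ) :
    frobNorm A = √(frobInner A A) := by
  simp only [frobNorm, frobInner, sq]

lemma frobNorm_mul_left_of_transpose_mul_self {Q : Matrix (Fin n) (Fin n) ℝ} (hQ : Qᵀ * Q = 1)
    (A : Matrix (Fin n) (Fin n) ℝ) : frobNorm (Q * A) = frobNorm A := by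
  rw [frobNorm_eq_sqrt_frobInner, frobNorm_eq_sqrt_frobInner,
    frobInner_mul_left_of_transpose_mul_self hQ]

lemma frobInner_deltaMat (A : Matrix (Fin n) (Fin n) ℝ) {i j : Fin n} (hij : i ≠ j) :
    frobInner A (deltaMat i j) = A j i - A i j := by
  have hdelta : deltaMat i j = single j i 1 - single i j 1 := by
    ext k l
    simp only [deltaMat, of_apply, Matrix.sub_apply, single_apply]
    split_ifs <;> grind
  simp [hdelta, frobInner, single, mul_sub, Finset.sum_sub_distrib, ite_and]

lemma exists_frobNorm_le_mul_abs (A : Matrix (Fin n) (Fin n) ℝ) (hn : 0 < n) :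
    ∃ p q : Fin n, frobNorm A ≤ n * |A p q| := by
  let i₀ : Fin n := ⟨0, hn⟩
  obtain ⟨⟨p, q⟩, -, hmax⟩ := Finset.exists_max_image Finset.univ
    (fun pq : Fin n × Fin n => A pq.1 pq.2 ^ 2) ⟨(i₀, i₀), Finset.mem_univ _⟩
  refine ⟨p, q, ?_⟩
  have hsum : ∑ k, ∑ l, A k l ^ 2 ≤ (n * |A p q|) ^ 2 := by
    rw [← Finset.sum_product']
    calc ∑ kl : Fin n × Fin n, A kl.1 kl.2 ^ 2
        ≤ ∑ _kl : Fin n × Fin n, A p q ^ 2 := Finset.sum_le_sum fun kl _ => hmax kl (by simp)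
      _ = (n * |A p q|) ^ 2 := by
          rw [Finset.sum_const, Finset.card_univ, Fintype.card_prod, Fintype.card_fin, nsmul_eq_mul,
            mul_pow, sq_abs]
          push_cast
          ring
  exact Real.sqrt_le_iff.mpr ⟨by positivity, hsum⟩

lemma exists_lt_frobNorm_le_mul_abs_of_transpose_eq_neg {A : Matrix (Fin n) (Fin n) ℝ}
    (hA : Aᵀ = -A) (hn : 2 ≤ n) : ∃ i j : Fin n, i < j ∧ frobNorm A ≤ n * |A j i| := by
  have hskew (i j : Fin n) : A i j = -A j i := by
    simpa using congrFun (congrFun hA j) i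
  obtain ⟨p, q, hpq⟩ := exists_frobNorm_le_mul_abs A (by omega)
  rcases lt_trichotomy p q with h | rfl | h
  · exact ⟨p, q, h, by rwa [hskew q p, abs_neg]⟩
  · have hdiag : A p p = 0 := by linarith [hskew p p]
    refine ⟨⟨0, by omega⟩, ⟨1, by omega⟩, Fin.mk_lt_mk.mpr one_pos, ?_⟩
    rw [hdiag, abs_zero, mul_zero] at hpq
    exact hpq.trans (by positivity)
  · exact ⟨q, p, h, hpq⟩

end Frobenius

section ProjectedGradient

variable {n : ℕ} (f : Matrix (Fin n) (Fin n) ℝ → ℝ) (Q : Matrix (Fin n) (Fin n) ℝ)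

lemma transpose_Lam : (Lam f Q)ᵀ = -Lam f Q := by
  simp only [Lam, transpose_smul, transpose_sub, transpose_mul, transpose_transpose, ← neg_smul,
    ← neg_sub (Qᵀ * grad f Q), smul_neg]

variable {Q}

lemma frobNorm_projGrad (hQ : Qᵀ * Q = 1) : frobNorm (projGrad f Q) = frobNorm (Lam f Q) :=
  frobNorm_mul_left_of_transpose_mul_self hQ _

lemma frobInner_projGrad_mul_deltaMat (hQ : Qᵀ * Q = 1) {i j : Fin n} (hij : i ≠ j) :
    frobInner (projGrad f Q) (Q * deltaMat i j) = 2 * Lam f Q j i := by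
  have hskew : Lam f Q i j = -Lam f Q j i := by
    simpa using congrFun (congrFun (transpose_Lam f Q) j) i
  rw [projGrad, frobInner_mul_left_of_transpose_mul_self hQ, frobInner_deltaMat _ hij, hskew]
  ring

end ProjectedGradient

theorem stmt_0_general {n : ℕ} (hn : 2 ≤ n) (f : Matrix (Fin n) (Fin n) ℝ → ℝ)
    (Q : Matrix (Fin n) (Fin n) ℝ) (hQ : Q ∈ SOn n)
    (ε : ℝ) (hε2 : ε ≤ 2 / n) :
    ∃ i j : Fin n, i < j ∧
      ε * frobNorm (projGrad f Q) ≤ |frobInner (projGrad f Q) (Q * deltaMat i j)| := by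
  obtain ⟨i, j, hij, hmax⟩ :=
    exists_lt_frobNorm_le_mul_abs_of_transpose_eq_neg (transpose_Lam f Q) hn
  refine ⟨i, j, hij, ?_⟩
  have hn0 : (0 : ℝ) < n := by positivity
  rw [frobInner_projGrad_mul_deltaMat f hQ.1 hij.ne, frobNorm_projGrad f hQ.1, abs_mul, abs_two]
  calc ε * frobNorm (Lam f Q) ≤ 2 / n * frobNorm (Lam f Q) :=
        mul_le_mul_of_nonneg_right hε2 (Real.sqrt_nonneg _)
    _ ≤ 2 / n * (n * |Lam f Q j i|) := by gcongr
    _ = 2 * |Lam f Q j i| := by field_simp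

theorem stmt_0 {n : ℕ} (hn : 2 ≤ n) (f : Matrix (Fin n) (Fin n) ℝ → ℝ)
    (hf : ∀ Q ∈ SOn n, DifferentiableAt ℝ f Q)
    (Q : Matrix (Fin n) (Fin n) ℝ) (hQ : Q ∈ SOn n)
    (ε : ℝ) (hε : 0 < ε) (hε2 : ε ≤ 2 / n) :
    ∃ i j : Fin n, i < j ∧
      ε * frobNorm (projGrad f Q) ≤ |frobInner (projGrad f Q) (Q * deltaMat i j)| :=
  stmt_0_general hn f Q hQ ε hε2
end

section
/- Let n ≥ 2, let f be a real-valued function on the space of real n×n matrices that is differentiable at Q ∈ SO(n), and let 1 ≤ i < j ≤ n. Define h(θ) := f(Q · G(i,j,θ)). Then the derivative of h at θ = 0 satisfies h'(0) = ⟨ProjGrad f(Q), Q δ_{i,j}⟩ = −2 Λ_{i,j}(Q), where δ_{i,j} is the n×n matrix whose (j,i) entry is 1, whose (i,j) entry is −1, and all other entries are 0. -/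
open Matrix Real Filter Set

attribute [local instance] Matrix.frobeniusNormedAddCommGroup Matrix.frobeniusNormedSpace

/-!
The curve `θ ↦ Q * givens i j θ` passes through `Q` with velocity `Q * deltaMat i j`, so by the
chain rule `h'(0) = ⟨∇f(Q), Q δ⟩ = (Qᵀ∇f(Q))ⱼᵢ - (Qᵀ∇f(Q))ᵢⱼ = -2 Λᵢⱼ`. Since `QᵀQ = 1`,
`⟨Q Λ, Q δ⟩ = Λⱼᵢ - Λᵢⱼ`, which is the same number because `Λ` is antisymmetric.
-/

section Frobenius

variable {n : ℕ}

lemma frobInner_mul_right (A Q M : Matrix (Fin n) (Fin n) ℝ) :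
    frobInner A (Q * M) = frobInner (Qᵀ * A) M := by
  rw [frobInner_eq_trace, frobInner_eq_trace, Matrix.transpose_mul, Matrix.transpose_transpose,
    Matrix.mul_assoc]

lemma fderiv_apply_eq_frobInner_grad (f : Matrix (Fin n) (Fin n) ℝ → ℝ)
    (Q M : Matrix (Fin n) (Fin n) ℝ) : fderiv ℝ f Q M = frobInner (grad f Q) M := by
  conv_lhs => rw [Matrix.matrix_eq_sum_single M]
  simp only [map_sum]
  refine Finset.sum_congr rfl fun k _ => Finset.sum_congr rfl fun l _ => ?_
  rw [← mul_one (M k l), ← smul_eq_mul, ← Matrix.smul_single, ContinuousLinearMap.map_smul]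
  simp [grad, mul_comm]

end Frobenius

section Lam

variable {n : ℕ} (f : Matrix (Fin n) (Fin n) ℝ → ℝ) (Q : Matrix (Fin n) (Fin n) ℝ)

lemma Lam_apply (a b : Fin n) :
    Lam f Q a b = (1 / 2 : ℝ) * ((Qᵀ * grad f Q) a b - (Qᵀ * grad f Q) b a) := by
  have hT : (grad f Q)ᵀ * Q = (Qᵀ * grad f Q)ᵀ := by
    rw [Matrix.transpose_mul, Matrix.transpose_transpose]
  rw [Lam, hT]
  simp only [Matrix.smul_apply, Matrix.sub_apply, transpose_apply, smul_eq_mul]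

lemma Lam_apply_swap (a b : Fin n) : Lam f Q b a = -Lam f Q a b := by
  rw [Lam_apply, Lam_apply]
  ring

lemma transpose_mul_projGrad (hQ : Qᵀ * Q = 1) : Qᵀ * projGrad f Q = Lam f Q := by
  rw [projGrad, ← Matrix.mul_assoc, hQ, Matrix.one_mul]

end Lam

section Givens

variable {n : ℕ} {i j : Fin n}

lemma givens_eq (hij : i ≠ j) (θ : ℝ) :
    givens i j θ = (1 - (single i i 1 + single j j 1))
      + Real.cos θ • (single i i 1 + single j j 1) + Real.sin θ • deltaMat i j := by
  ext k l
  simp only [givens, deltaMat, Matrix.of_apply, Matrix.add_apply, Matrix.sub_apply,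
    Matrix.smul_apply, Matrix.one_apply, Matrix.single, smul_eq_mul]
  by_cases hki : k = i <;> by_cases hkj : k = j <;> by_cases hli : l = i <;>
    by_cases hlj : l = j <;> subst_vars <;> simp_all [eq_comm]

lemma givens_zero (hij : i ≠ j) : givens i j 0 = 1 := by
  simp [givens_eq hij]

lemma hasDerivAt_mul_givens_zero (hij : i ≠ j) (Q : Matrix (Fin n) (Fin n) ℝ) :
    HasDerivAt (fun θ => Q * givens i j θ) (Q * deltaMat i j) 0 := by
  set B : Matrix (Fin n) (Fin n) ℝ := single i i 1 + single j j 1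
  have hcurve : (fun θ => Q * givens i j θ) =
      fun θ => Q * (1 - B) + Real.cos θ • (Q * B) + Real.sin θ • (Q * deltaMat i j) := by
    funext θ
    rw [givens_eq hij, mul_add, mul_add, mul_smul_comm, mul_smul_comm]
  have hderiv := (((hasDerivAt_const (0 : ℝ) (Q * (1 - B))).add
    ((Real.hasDerivAt_cos 0).smul_const (Q * B))).add
    ((Real.hasDerivAt_sin 0).smul_const (Q * deltaMat i j)))
  simp only [Real.sin_zero, Real.cos_zero, neg_zero, zero_smul, zero_add, one_smul] at hderiv
  rwa [hcurve]

end Givens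

theorem stmt_1_general {n : ℕ} (f : Matrix (Fin n) (Fin n) ℝ → ℝ)
    (Q : Matrix (Fin n) (Fin n) ℝ) (hQ : Q ∈ SOn n)
    (hf : DifferentiableAt ℝ f Q) (i j : Fin n) (hij : i < j) :
    deriv (fun θ : ℝ => f (Q * givens i j θ)) 0 = frobInner (projGrad f Q) (Q * deltaMat i j) ∧
    deriv (fun θ : ℝ => f (Q * givens i j θ)) 0 = -2 * Lam f Q i j := by
  have hne : i ≠ j := hij.ne
  have hf' : HasFDerivAt f (fderiv ℝ f Q) (Q * givens i j 0) := by
    rw [givens_zero hne, Matrix.mul_one]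
    exact hf.hasFDerivAt
  have hderiv : deriv (fun θ : ℝ => f (Q * givens i j θ)) 0 =
      frobInner (grad f Q) (Q * deltaMat i j) :=
    (hf'.comp_hasDerivAt 0 (hasDerivAt_mul_givens_zero hne Q)).deriv.trans
      (fderiv_apply_eq_frobInner_grad f Q _)
  have hgrad : frobInner (grad f Q) (Q * deltaMat i j) = -2 * Lam f Q i j := by
    rw [frobInner_mul_right, frobInner_deltaMat _ hne, Lam_apply]
    ring
  have hproj : frobInner (projGrad f Q) (Q * deltaMat i j) = -2 * Lam f Q i j := by
    rw [frobInner_mul_right, transpose_mul_projGrad f Q hQ.1, frobInner_deltaMat _ hne,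
      Lam_apply_swap]
    ring
  exact ⟨hderiv.trans (hgrad.trans hproj.symm), hderiv.trans hgrad⟩

theorem stmt_1 {n : ℕ} (hn : 2 ≤ n) (f : Matrix (Fin n) (Fin n) ℝ → ℝ)
    (Q : Matrix (Fin n) (Fin n) ℝ) (hQ : Q ∈ SOn n)
    (hf : DifferentiableAt ℝ f Q) (i j : Fin n) (hij : i < j) :
    deriv (fun θ : ℝ => f (Q * givens i j θ)) 0 = frobInner (projGrad f Q) (Q * deltaMat i j) ∧
    deriv (fun θ : ℝ => f (Q * givens i j θ)) 0 = -2 * Lam f Q i j :=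
  stmt_1_general f Q hQ hf i j hij
end

section
/- Let n ≥ 2 and let W ∈ ℝ^{n×n×n} be a symmetric third-order tensor. For θ ∈ ℝ, let T(θ) be the tensor with entries T_{ijk}(θ) = Σ_{p,q,r=1}^n W_{pqr} G_{pi} G_{qj} G_{rk}, where G = G(1,2,θ) is the Givens rotation in the (1,2)-plane, and define h(θ) := Σ_{j=1}^n T_{jjj}(θ)². Then for every θ ∈ ℝ, writing T = T(θ): h'(θ) = 6 (T_{111} T_{112} − T_{122} T_{222}) and h''(θ) = −6 (T_{111}² + T_{222}² − 3 T_{112}² − 3 T_{122}² − 2 T_{111} T_{122} − 2 T_{112} T_{222}). -/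
/-!
The Givens rotation satisfies `G(θ)' = G(θ) Δ` with `Δ = deltaMat i j`, so by the product rule
`T_{abc}'` is the sum of the contractions of `T` with `Δ` in each of its three slots. Contracting
with `Δ` sends the index `i` to `j`, the index `j` to `-i`, and kills every other index; with the
symmetry of `T` this gives `T_{iii}' = 3 T_{iij}`, `T_{iij}' = 2 T_{ijj} - T_{iii}`,
`T_{ijj}' = T_{jjj} - 2 T_{iij}`, `T_{jjj}' = -3 T_{ijj}` and `T_{sss}' = 0` for `s ∉ {i, j}`.
Differentiating `h = ∑ T_{sss}²` once, and the resulting expression for `h'` once more, gives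
both formulas.
-/

open Matrix Real Filter Set

attribute [local instance] Matrix.frobeniusNormedAddCommGroup Matrix.frobeniusNormedSpace

variable {n : ℕ}

def tensorTransform (W : Fin n → Fin n → Fin n → ℝ) (G : Matrix (Fin n) (Fin n) ℝ)
    (a b c : Fin n) : ℝ :=
  ∑ p, ∑ q, ∑ r, W p q r * G p a * G q b * G r c

section Symmetric

variable {W : Fin n → Fin n → Fin n → ℝ} (G : Matrix (Fin n) (Fin n) ℝ)

lemma tensorTransform_swap₁₂ (hsym : ∀ p q r, W p q r = W q p r) (a b c : Fin n) :
    tensorTransform W G a b c = tensorTransform W G b a c := by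
  unfold tensorTransform
  rw [Finset.sum_comm]
  simp only [hsym _ _ _, mul_right_comm _ (G _ a)]

lemma tensorTransform_swap₂₃ (hsym : ∀ p q r, W p q r = W p r q) (a b c : Fin n) :
    tensorTransform W G a b c = tensorTransform W G a c b := by
  unfold tensorTransform
  refine Finset.sum_congr rfl fun p _ => ?_
  rw [Finset.sum_comm]
  simp only [hsym p _ _, mul_right_comm _ (G _ b)]

end Symmetric

lemma hasDerivAt_tensorTransform (W : Fin n → Fin n → Fin n → ℝ)
    {G : ℝ → Matrix (Fin n) (Fin n) ℝ} {D : Matrix (Fin n) (Fin n) ℝ} {θ : ℝ}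
    (hG : ∀ p a, HasDerivAt (fun θ => G θ p a) ((G θ * D) p a) θ) (a b c : Fin n) :
    HasDerivAt (fun θ => tensorTransform W (G θ) a b c)
      (((fun d => tensorTransform W (G θ) d b c) ᵥ* D) a
        + ((fun d => tensorTransform W (G θ) a d c) ᵥ* D) b
        + ((fun d => tensorTransform W (G θ) a b d) ᵥ* D) c) θ := by
  refine (HasDerivAt.fun_sum (u := Finset.univ) fun p _ => HasDerivAt.fun_sum (u := Finset.univ)
    fun q _ => HasDerivAt.fun_sum (u := Finset.univ) fun r _ =>
      (((hG p a).const_mul (W p q r)).fun_mul (hG q b)).fun_mul (hG r c)).congr_deriv ?_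
  simp only [tensorTransform, vecMul, dotProduct, mul_apply, Finset.sum_mul, Finset.mul_sum,
    ← Finset.sum_add_distrib]
  symm
  rw [Finset.sum_comm]
  refine Finset.sum_congr rfl fun p _ => ?_
  rw [Finset.sum_comm]
  refine Finset.sum_congr rfl fun q _ => ?_
  rw [Finset.sum_comm]
  exact Finset.sum_congr rfl fun r _ => Finset.sum_congr rfl fun d _ => by ring

lemma hasDerivAt_tensorTransform_diag {W : Fin n → Fin n → Fin n → ℝ}
    (hsym₁ : ∀ p q r, W p q r = W q p r) (hsym₂ : ∀ p q r, W p q r = W p r q)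
    {G : ℝ → Matrix (Fin n) (Fin n) ℝ} {D : Matrix (Fin n) (Fin n) ℝ} {θ : ℝ}
    (hG : ∀ p a, HasDerivAt (fun θ => G θ p a) ((G θ * D) p a) θ) (s : Fin n) :
    HasDerivAt (fun θ => tensorTransform W (G θ) s s s)
      (3 * ((fun d => tensorTransform W (G θ) d s s) ᵥ* D) s) θ := by
  refine (hasDerivAt_tensorTransform W hG s s s).congr_deriv ?_
  have h₂ : (fun d => tensorTransform W (G θ) s d s) = fun d => tensorTransform W (G θ) d s s :=
    funext fun d => tensorTransform_swap₁₂ _ hsym₁ s d s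
  have h₃ : (fun d => tensorTransform W (G θ) s s d) = fun d => tensorTransform W (G θ) d s s :=
    funext fun d =>
      (tensorTransform_swap₂₃ _ hsym₂ s s d).trans (tensorTransform_swap₁₂ _ hsym₁ s d s)
  rw [h₂, h₃]
  ring

section Givens

variable {i j : Fin n}

lemma vecMul_deltaMat_apply_left (hij : i ≠ j) (v : Fin n → ℝ) :
    (v ᵥ* deltaMat i j) i = v j := by
  simp [vecMul, dotProduct, deltaMat, hij]

lemma vecMul_deltaMat_apply_right (hij : i ≠ j) (v : Fin n → ℝ) :
    (v ᵥ* deltaMat i j) j = -v i := by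
  simp [vecMul, dotProduct, deltaMat, hij.symm]

lemma vecMul_deltaMat_apply_of_ne {a : Fin n} (hai : a ≠ i) (haj : a ≠ j) (v : Fin n → ℝ) :
    (v ᵥ* deltaMat i j) a = 0 := by
  simp [vecMul, dotProduct, deltaMat, hai, haj]

lemma hasDerivAt_givens_apply (hij : i ≠ j) (p a : Fin n) (θ : ℝ) :
    HasDerivAt (fun θ => givens i j θ p a) ((givens i j θ * deltaMat i j) p a) θ := by
  rw [mul_apply_eq_vecMul]
  by_cases hai : a = i
  · subst hai
    rw [vecMul_deltaMat_apply_left hij]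
    by_cases hpa : p = a
    · subst hpa; simpa [givens, hij, hij.symm] using hasDerivAt_cos θ
    by_cases hpj : p = j
    · subst hpj; simpa [givens, hij, hpa] using hasDerivAt_sin θ
    · simpa [givens, hij, hpa, hpj] using hasDerivAt_const θ (0 : ℝ)
  by_cases haj : a = j
  · subst haj
    rw [vecMul_deltaMat_apply_right hij]
    by_cases hpi : p = i
    · subst hpi; simpa [givens, hij, hij.symm] using (hasDerivAt_sin θ).fun_neg
    by_cases hpa : p = a
    · subst hpa; simpa [givens, hij, hpi] using hasDerivAt_cos θ
    · simpa [givens, hpi, hpa] using hasDerivAt_const θ (0 : ℝ)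
  · rw [vecMul_deltaMat_apply_of_ne hai haj]
    simpa [givens, hai, haj] using hasDerivAt_const θ _

end Givens

section GivensTransform

variable {W : Fin n → Fin n → Fin n → ℝ} {i j : Fin n}

lemma hasDerivAt_tensorTransform_givens_iii (hsym₁ : ∀ p q r, W p q r = W q p r)
    (hsym₂ : ∀ p q r, W p q r = W p r q) (hij : i ≠ j) (θ : ℝ) :
    HasDerivAt (fun θ => tensorTransform W (givens i j θ) i i i)
      (3 * tensorTransform W (givens i j θ) i i j) θ := by
  have H := hasDerivAt_tensorTransform_diag hsym₁ hsym₂ (hasDerivAt_givens_apply hij · · θ) i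
  rwa [vecMul_deltaMat_apply_left hij, tensorTransform_swap₁₂ _ hsym₁,
    tensorTransform_swap₂₃ _ hsym₂] at H

lemma hasDerivAt_tensorTransform_givens_jjj (hsym₁ : ∀ p q r, W p q r = W q p r)
    (hsym₂ : ∀ p q r, W p q r = W p r q) (hij : i ≠ j) (θ : ℝ) :
    HasDerivAt (fun θ => tensorTransform W (givens i j θ) j j j)
      (-3 * tensorTransform W (givens i j θ) i j j) θ := by
  have H := hasDerivAt_tensorTransform_diag hsym₁ hsym₂ (hasDerivAt_givens_apply hij · · θ) j
  rw [vecMul_deltaMat_apply_right hij] at H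
  exact H.congr_deriv (by ring)

lemma hasDerivAt_tensorTransform_givens_iij (hsym₁ : ∀ p q r, W p q r = W q p r) (hij : i ≠ j)
    (θ : ℝ) :
    HasDerivAt (fun θ => tensorTransform W (givens i j θ) i i j)
      (2 * tensorTransform W (givens i j θ) i j j - tensorTransform W (givens i j θ) i i i) θ := by
  have H := hasDerivAt_tensorTransform W (hasDerivAt_givens_apply hij · · θ) i i j
  rw [vecMul_deltaMat_apply_left hij, vecMul_deltaMat_apply_left hij,
    vecMul_deltaMat_apply_right hij, tensorTransform_swap₁₂ _ hsym₁ j] at H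
  exact H.congr_deriv (by ring)

lemma hasDerivAt_tensorTransform_givens_ijj (hsym₂ : ∀ p q r, W p q r = W p r q) (hij : i ≠ j)
    (θ : ℝ) :
    HasDerivAt (fun θ => tensorTransform W (givens i j θ) i j j)
      (tensorTransform W (givens i j θ) j j j - 2 * tensorTransform W (givens i j θ) i i j) θ := by
  have H := hasDerivAt_tensorTransform W (hasDerivAt_givens_apply hij · · θ) i j j
  rw [vecMul_deltaMat_apply_left hij, vecMul_deltaMat_apply_right hij,
    vecMul_deltaMat_apply_right hij, tensorTransform_swap₂₃ _ hsym₂ i j i] at H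
  exact H.congr_deriv (by ring)

lemma hasDerivAt_sum_tensorTransform_givens_diag_sq (hsym₁ : ∀ p q r, W p q r = W q p r)
    (hsym₂ : ∀ p q r, W p q r = W p r q) (hij : i ≠ j) (θ : ℝ) :
    HasDerivAt (fun θ => ∑ s, tensorTransform W (givens i j θ) s s s ^ 2)
      (6 * (tensorTransform W (givens i j θ) i i i * tensorTransform W (givens i j θ) i i j
        - tensorTransform W (givens i j θ) i j j * tensorTransform W (givens i j θ) j j j)) θ := by
  refine (HasDerivAt.fun_sum (u := Finset.univ) fun s _ =>
    (hasDerivAt_tensorTransform_diag hsym₁ hsym₂ (hasDerivAt_givens_apply hij · · θ) s).fun_pow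
      2).congr_deriv ?_
  rw [Fintype.sum_eq_add i j hij fun s hs => by simp [vecMul_deltaMat_apply_of_ne hs.1 hs.2],
    vecMul_deltaMat_apply_left hij, vecMul_deltaMat_apply_right hij,
    tensorTransform_swap₁₂ _ hsym₁ j, tensorTransform_swap₂₃ _ hsym₂ i j i]
  ring

end GivensTransform

theorem stmt_6_general {n : ℕ} (W : Fin n → Fin n → Fin n → ℝ)
    (hsym1 : ∀ p q r, W p q r = W q p r) (hsym2 : ∀ p q r, W p q r = W p r q)
    (i j : Fin n) (hi : (i : ℕ) = 0) (hj : (j : ℕ) = 1)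
    (T : ℝ → Fin n → Fin n → Fin n → ℝ)
    (hT : ∀ θ a b c, T θ a b c =
      ∑ p, ∑ q, ∑ r, W p q r * givens i j θ p a * givens i j θ q b * givens i j θ r c)
    (h : ℝ → ℝ) (hh : ∀ θ, h θ = ∑ s, (T θ s s s) ^ 2) (θ : ℝ) :
    deriv h θ = 6 * (T θ i i i * T θ i i j - T θ i j j * T θ j j j) ∧
    deriv (deriv h) θ = -6 * ((T θ i i i) ^ 2 + (T θ j j j) ^ 2 - 3 * (T θ i i j) ^ 2
      - 3 * (T θ i j j) ^ 2 - 2 * T θ i i i * T θ i j j - 2 * T θ i i j * T θ j j j) := by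
  have hij : i ≠ j := fun e => by simp [Fin.ext_iff, hi, hj] at e
  obtain rfl : T = fun θ => tensorTransform W (givens i j θ) := funext fun θ => funext₃ (hT θ)
  obtain rfl : h = fun θ => ∑ s, tensorTransform W (givens i j θ) s s s ^ 2 := funext hh
  have hh' := hasDerivAt_sum_tensorTransform_givens_diag_sq hsym1 hsym2 hij
  refine ⟨(hh' θ).deriv, ?_⟩
  rw [funext fun θ => (hh' θ).deriv]
  refine ((((hasDerivAt_tensorTransform_givens_iii hsym1 hsym2 hij θ).mul
    (hasDerivAt_tensorTransform_givens_iij hsym1 hij θ)).sub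
    ((hasDerivAt_tensorTransform_givens_ijj hsym2 hij θ).mul
    (hasDerivAt_tensorTransform_givens_jjj hsym1 hsym2 hij θ))).const_mul 6).deriv.trans ?_
  ring

theorem stmt_6 {n : ℕ} (hn : 2 ≤ n) (W : Fin n → Fin n → Fin n → ℝ)
    (hsym1 : ∀ p q r, W p q r = W q p r) (hsym2 : ∀ p q r, W p q r = W p r q)
    (i j : Fin n) (hi : (i : ℕ) = 0) (hj : (j : ℕ) = 1)
    (T : ℝ → Fin n → Fin n → Fin n → ℝ)
    (hT : ∀ θ a b c, T θ a b c =
      ∑ p, ∑ q, ∑ r, W p q r * givens i j θ p a * givens i j θ q b * givens i j θ r c)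
    (h : ℝ → ℝ) (hh : ∀ θ, h θ = ∑ s, (T θ s s s) ^ 2) (θ : ℝ) :
    deriv h θ = 6 * (T θ i i i * T θ i i j - T θ i j j * T θ j j j) ∧
    deriv (deriv h) θ = -6 * ((T θ i i i) ^ 2 + (T θ j j j) ^ 2 - 3 * (T θ i i j) ^ 2
      - 3 * (T θ i j j) ^ 2 - 2 * T θ i i i * T θ i j j - 2 * T θ i i j * T θ j j j) :=
  stmt_6_general W hsym1 hsym2 i j hi hj T hT h hh θ
end

section
/- Let n ≥ 2 and let A^{(1)},…,A^{(m)} ∈ ℝ^{n×n×n} be symmetric third-order tensors. Fix Q ∈ SO(n) and 1 ≤ i < j ≤ n, and define h(θ) := Σ_{ℓ=1}^m Σ_{s=1}^n (W^{(ℓ)}_{sss}(Q G(i,j,θ)))², where W^{(ℓ)}_{abc}(U) = Σ_{p,q,r} A^{(ℓ)}_{pqr} U_{pa} U_{qb} U_{rc}, and τ(x) := h(arctan x) for x ∈ ℝ. Then for all x ∈ ℝ: τ(x) − τ(0) = [h'(0)(x − x³) + (1/2) h''(0) x²] / (1 + x²)², and τ'(x) = [h'(0)(1 − 6x² + x⁴)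 + h''(0)(x − x³)] / (1 + x²)³. -/
/-!
Write `c = cos θ`, `s = sin θ`. Right multiplication by `G(i,j,θ)` fixes every column of `Q` except
the `i`-th and `j`-th, which become `c qᵢ + s qⱼ` and `-s qᵢ + c qⱼ`. Hence `W_sss` is constant in
`θ` for `s ∉ {i, j}`, while `W_iii = f(c, s)` and `W_jjj = f(-s, c)` for a binary cubic form `f`.
The function `g(θ) = f(cos θ, sin θ)² + f(-sin θ, cos θ)²` has period `π/2` (as `f` is odd), and is
a trigonometric polynomial of degree at most 6, so it lies in the span of `1, sin 4θ, cos 4θ`.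
Thus `h = E + P sin 4θ + C cos 4θ`, with `h'(0) = 4P` and `h''(0) = -16C`, and both formulas follow
from `sin (4 arctan x) = 4(x - x³)/(1 + x²)²` and `cos (4 arctan x) = (1 - 6x² + x⁴)/(1 + x²)²`.
-/

open Matrix Real Filter Set

attribute [local instance] Matrix.frobeniusNormedAddCommGroup Matrix.frobeniusNormedSpace

lemma Real.sin_four_mul (θ : ℝ) :
    sin (4 * θ) = 4 * cos θ ^ 3 * sin θ - 4 * cos θ * sin θ ^ 3 := by
  rw [show 4 * θ = 2 * (2 * θ) by ring, sin_two_mul, sin_two_mul, cos_two_mul]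
  linear_combination 4 * sin θ * cos θ * sin_sq_add_cos_sq θ

lemma Real.cos_four_mul (θ : ℝ) :
    cos (4 * θ) = cos θ ^ 4 - 6 * cos θ ^ 2 * sin θ ^ 2 + sin θ ^ 4 := by
  rw [show 4 * θ = 2 * (2 * θ) by ring, cos_two_mul, cos_two_mul]
  linear_combination (7 * cos θ ^ 2 - sin θ ^ 2 - 1) * sin_sq_add_cos_sq θ

lemma Real.sin_arctan_eq_mul_cos_arctan (x : ℝ) : sin (arctan x) = x * cos (arctan x) := by
  rw [sin_arctan, cos_arctan, mul_one_div]

lemma Real.sin_four_mul_arctan (x : ℝ) :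
    sin (4 * arctan x) = 4 * (x - x ^ 3) / (1 + x ^ 2) ^ 2 := by
  rw [sin_four_mul, sin_arctan_eq_mul_cos_arctan,
    show ∀ c : ℝ, 4 * c ^ 3 * (x * c) - 4 * c * (x * c) ^ 3 = 4 * (x - x ^ 3) * (c ^ 2) ^ 2 by
      intro c; ring, cos_sq_arctan]
  field_simp

lemma Real.cos_four_mul_arctan (x : ℝ) :
    cos (4 * arctan x) = (1 - 6 * x ^ 2 + x ^ 4) / (1 + x ^ 2) ^ 2 := by
  rw [cos_four_mul, sin_arctan_eq_mul_cos_arctan,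
    show ∀ c : ℝ,
        c ^ 4 - 6 * c ^ 2 * (x * c) ^ 2 + (x * c) ^ 4 = (1 - 6 * x ^ 2 + x ^ 4) * (c ^ 2) ^ 2 by
      intro c; ring, cos_sq_arctan]
  field_simp

noncomputable def sinCosFour (E P C : ℝ) (θ : ℝ) : ℝ := E + P * sin (4 * θ) + C * cos (4 * θ)

def IsSinCosFour (h : ℝ → ℝ) : Prop := ∃ E P C : ℝ, h = sinCosFour E P C

namespace IsSinCosFour

lemma const (E : ℝ) : IsSinCosFour fun _ => E := ⟨E, 0, 0, by ext; simp [sinCosFour]⟩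

lemma add {f g : ℝ → ℝ} (hf : IsSinCosFour f) (hg : IsSinCosFour g) : IsSinCosFour (f + g) := by
  obtain ⟨E, P, C, rfl⟩ := hf
  obtain ⟨E', P', C', rfl⟩ := hg
  exact ⟨E + E', P + P', C + C', by ext; simp only [sinCosFour, Pi.add_apply]; ring⟩

lemma sum {ι : Type*} (s : Finset ι) {f : ι → ℝ → ℝ} (hf : ∀ k ∈ s, IsSinCosFour (f k)) :
    IsSinCosFour fun θ => ∑ k ∈ s, f k θ := by
  simp only [← Finset.sum_apply]
  exact Finset.sum_induction f _ (fun _ _ => add) (const 0) hf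

end IsSinCosFour

lemma hasDerivAt_sinCosFour (E P C θ : ℝ) :
    HasDerivAt (sinCosFour E P C) (4 * P * cos (4 * θ) - 4 * C * sin (4 * θ)) θ := by
  have h4 : HasDerivAt (fun t : ℝ => 4 * t) 4 θ := by simpa using (hasDerivAt_id θ).const_mul 4
  exact ((((h4.sin).const_mul P).const_add E).add ((h4.cos).const_mul C)).congr_deriv (by ring)

lemma deriv_sinCosFour (E P C : ℝ) : deriv (sinCosFour E P C) = sinCosFour 0 (-4 * C) (4 * P) := by
  ext θ
  rw [(hasDerivAt_sinCosFour E P C θ).deriv]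
  unfold sinCosFour
  ring

lemma sinCosFour_zero (E P C : ℝ) : sinCosFour E P C 0 = E + C := by simp [sinCosFour]

lemma sinCosFour_arctan (E P C x : ℝ) :
    sinCosFour E P C (arctan x) =
      E + (4 * P * (x - x ^ 3) + C * (1 - 6 * x ^ 2 + x ^ 4)) / (1 + x ^ 2) ^ 2 := by
  rw [sinCosFour, sin_four_mul_arctan, cos_four_mul_arctan]
  ring

lemma sinCosFour_comp_arctan_sub (E P C x : ℝ) :
    (sinCosFour E P C ∘ arctan) x - (sinCosFour E P C ∘ arctan) 0 =
      (deriv (sinCosFour E P C) 0 * (x - x ^ 3) +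
        (1 / 2) * deriv (deriv (sinCosFour E P C)) 0 * x ^ 2) / (1 + x ^ 2) ^ 2 := by
  simp only [Function.comp_apply, sinCosFour_arctan, arctan_zero, deriv_sinCosFour, sinCosFour_zero]
  field_simp
  ring

lemma deriv_sinCosFour_comp_arctan (E P C x : ℝ) :
    deriv (sinCosFour E P C ∘ arctan) x =
      (deriv (sinCosFour E P C) 0 * (1 - 6 * x ^ 2 + x ^ 4) +
        deriv (deriv (sinCosFour E P C)) 0 * (x - x ^ 3)) / (1 + x ^ 2) ^ 3 := by
  rw [((hasDerivAt_sinCosFour E P C (arctan x)).comp x (hasDerivAt_arctan x)).deriv,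
    sin_four_mul_arctan, cos_four_mul_arctan]
  simp only [deriv_sinCosFour, sinCosFour_zero]
  field_simp
  ring

section Givens

variable {n : ℕ} {i j : Fin n} (Q : Matrix (Fin n) (Fin n) ℝ) (θ : ℝ)

lemma transpose_mul_givens_apply_left (hij : i ≠ j) :
    (Q * givens i j θ)ᵀ i = cos θ • Qᵀ i + sin θ • Qᵀ j := by
  ext p
  rw [transpose_apply, mul_apply,
    Fintype.sum_eq_add i j hij fun k hk => by simp [givens, hk.1, hk.2]]
  simp [givens, hij, hij.symm, mul_comm]

lemma transpose_mul_givens_apply_right (hij : i ≠ j) :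
    (Q * givens i j θ)ᵀ j = -sin θ • Qᵀ i + cos θ • Qᵀ j := by
  ext p
  rw [transpose_apply, mul_apply,
    Fintype.sum_eq_add i j hij fun k hk => by simp [givens, hk.1, hk.2]]
  simp [givens, hij, hij.symm, mul_comm]

lemma transpose_mul_givens_apply_of_ne {s : Fin n} (hi : s ≠ i) (hj : s ≠ j) :
    (Q * givens i j θ)ᵀ s = Qᵀ s := by
  ext p
  rw [transpose_apply, mul_apply, Fintype.sum_eq_single s fun k hk => by simp [givens, hk, hi, hj]]
  simp [givens, hi, hj]

end Givens

section Cubic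

variable {n : ℕ}

def trilin (B : Fin n → Fin n → Fin n → ℝ) (u v w : Fin n → ℝ) : ℝ :=
  ∑ p, ∑ q, ∑ r, B p q r * u p * v q * w r

def cubic (B : Fin n → Fin n → Fin n → ℝ) (u : Fin n → ℝ) : ℝ := trilin B u u u

def binCubic (t₁ t₂ t₃ t₄ c s : ℝ) : ℝ := c ^ 3 * t₁ + c ^ 2 * s * t₂ + c * s ^ 2 * t₃ + s ^ 3 * t₄

lemma cubic_smul_add_smul (B : Fin n → Fin n → Fin n → ℝ) (u v : Fin n → ℝ) (c s : ℝ) :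
    cubic B (c • u + s • v) = binCubic (trilin B u u u)
      (trilin B u u v + trilin B u v u + trilin B v u u)
      (trilin B u v v + trilin B v u v + trilin B v v u) (trilin B v v v) c s := by
  simp only [cubic, trilin, binCubic, Pi.add_apply, Pi.smul_apply, smul_eq_mul, Finset.mul_sum,
    ← Finset.sum_add_distrib]
  refine Finset.sum_congr rfl fun p _ => Finset.sum_congr rfl fun q _ =>
    Finset.sum_congr rfl fun r _ => ?_
  ring

lemma isSinCosFour_binCubic_sq_add_sq (t₁ t₂ t₃ t₄ : ℝ) :
    IsSinCosFour fun θ => binCubic t₁ t₂ t₃ t₄ (cos θ) (sin θ) ^ 2 +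
      binCubic t₁ t₂ t₃ t₄ (-sin θ) (cos θ) ^ 2 := by
  set E := 5/8 * t₁ ^ 2 + 1/8 * t₂ ^ 2 + 1/8 * t₃ ^ 2 + 5/8 * t₄ ^ 2 + 1/4 * t₂ * t₄ + 1/4 * t₁ * t₃
  set P := 1/2 * t₁ * t₂ - 1/2 * t₃ * t₄
  set C := 3/8 * t₁ ^ 2 - 1/8 * t₂ ^ 2 - 1/8 * t₃ ^ 2 + 3/8 * t₄ ^ 2 - 1/4 * t₂ * t₄ - 1/4 * t₁ * t₃
  have homogeneous : ∀ c s : ℝ, binCubic t₁ t₂ t₃ t₄ c s ^ 2 + binCubic t₁ t₂ t₃ t₄ (-s) c ^ 2 =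
      E * (c ^ 2 + s ^ 2) ^ 3 + P * (4 * c ^ 3 * s - 4 * c * s ^ 3) * (c ^ 2 + s ^ 2) +
        C * (c ^ 4 - 6 * c ^ 2 * s ^ 2 + s ^ 4) * (c ^ 2 + s ^ 2) := by
    intro c s; simp only [binCubic, E, P, C]; ring
  refine ⟨E, P, C, funext fun θ => ?_⟩
  rw [homogeneous, cos_sq_add_sin_sq, sinCosFour, sin_four_mul, cos_four_mul]
  ring

lemma isSinCosFour_sum_sq_cubic_mul_givens (B : Fin n → Fin n → Fin n → ℝ)
    (Q : Matrix (Fin n) (Fin n) ℝ) {i j : Fin n} (hij : i ≠ j) :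
    IsSinCosFour fun θ => ∑ s, cubic B ((Q * givens i j θ)ᵀ s) ^ 2 := by
  have hpair : IsSinCosFour fun θ =>
      cubic B ((Q * givens i j θ)ᵀ i) ^ 2 + cubic B ((Q * givens i j θ)ᵀ j) ^ 2 := by
    simp only [transpose_mul_givens_apply_left Q _ hij, transpose_mul_givens_apply_right Q _ hij,
      cubic_smul_add_smul]
    exact isSinCosFour_binCubic_sq_add_sq _ _ _ _
  have hrest : ∀ s ∈ Finset.univ \ {i, j},
      IsSinCosFour fun θ => cubic B ((Q * givens i j θ)ᵀ s) ^ 2 := by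
    intro s hs
    simp only [Finset.mem_sdiff, Finset.mem_insert, Finset.mem_singleton, not_or] at hs
    simp only [transpose_mul_givens_apply_of_ne Q _ hs.2.1 hs.2.2]
    exact IsSinCosFour.const _
  convert (IsSinCosFour.sum _ hrest).add hpair using 1
  ext θ
  rw [Pi.add_apply, ← Finset.sum_sdiff (Finset.subset_univ {i, j}), Finset.sum_pair hij]

end Cubic

theorem stmt_8_general {n m : ℕ} (A : Fin m → (Fin n → Fin n → Fin n → ℝ))
    (Q : Matrix (Fin n) (Fin n) ℝ)
    (i j : Fin n) (hij : i < j)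
    (h : ℝ → ℝ)
    (hh : ∀ θ, h θ = ∑ ℓ : Fin m, ∑ s, (∑ p, ∑ q, ∑ r, A ℓ p q r *
      (Q * givens i j θ) p s * (Q * givens i j θ) q s * (Q * givens i j θ) r s) ^ 2)
    (τ : ℝ → ℝ) (hτ : ∀ x, τ x = h (Real.arctan x)) (x : ℝ) :
    τ x - τ 0 =
      (deriv h 0 * (x - x ^ 3) + (1 / 2) * deriv (deriv h) 0 * x ^ 2) / (1 + x ^ 2) ^ 2 ∧
    deriv τ x =
      (deriv h 0 * (1 - 6 * x ^ 2 + x ^ 4) + deriv (deriv h) 0 * (x - x ^ 3)) / (1 + x ^ 2) ^ 3 := by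
  obtain ⟨E, P, C, rfl⟩ : IsSinCosFour h := by
    rw [show h = _ from funext hh]
    exact IsSinCosFour.sum _ fun ℓ _ => isSinCosFour_sum_sq_cubic_mul_givens (A ℓ) Q hij.ne
  obtain rfl : τ = sinCosFour E P C ∘ arctan := funext hτ
  exact ⟨sinCosFour_comp_arctan_sub E P C x, deriv_sinCosFour_comp_arctan E P C x⟩

theorem stmt_8 {n m : ℕ} (hn : 2 ≤ n) (A : Fin m → (Fin n → Fin n → Fin n → ℝ))
    (hsym1 : ∀ ℓ p q r, A ℓ p q r = A ℓ q p r)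
    (hsym2 : ∀ ℓ p q r, A ℓ p q r = A ℓ p r q)
    (Q : Matrix (Fin n) (Fin n) ℝ) (hQ : Q ∈ SOn n)
    (i j : Fin n) (hij : i < j)
    (h : ℝ → ℝ)
    (hh : ∀ θ, h θ = ∑ ℓ : Fin m, ∑ s, (∑ p, ∑ q, ∑ r, A ℓ p q r *
      (Q * givens i j θ) p s * (Q * givens i j θ) q s * (Q * givens i j θ) r s) ^ 2)
    (τ : ℝ → ℝ) (hτ : ∀ x, τ x = h (Real.arctan x)) (x : ℝ) :
    τ x - τ 0 =
      (deriv h 0 * (x - x ^ 3) + (1 / 2) * deriv (deriv h) 0 * x ^ 2) / (1 + x ^ 2) ^ 2 ∧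
    deriv τ x =
      (deriv h 0 * (1 - 6 * x ^ 2 + x ^ 4) + deriv (deriv h) 0 * (x - x ^ 3)) / (1 + x ^ 2) ^ 3 :=
  stmt_8_general A Q i j hij h hh τ hτ x
end

section
/- Let n ≥ 2 and let A^{(1)},…,A^{(m)} be real symmetric n×n matrices. Fix Q ∈ SO(n) and 1 ≤ i < j ≤ n, and define h(θ) := Σ_{ℓ=1}^m Σ_{s=1}^n (((Q G(i,j,θ))ᵀ A^{(ℓ)} (Q G(i,j,θ)))_{ss})², and τ(x) := h(arctan x) for x ∈ ℝ. Then for all x ∈ ℝ: τ(x) − τ(0) = [h'(0)(x − x³) + (1/2) h''(0) x²] / (1 + x²)², and τ'(x) = [h'(0)(1 − 6x² + x⁴) + h''(0)(x − x³)] / (1 + x²)³. -/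
open Matrix Real Filter Set

attribute [local instance] Matrix.frobeniusNormedAddCommGroup Matrix.frobeniusNormedSpace

/-! A Givens rotation `G = givens i j θ` fixes every basis vector except `e_i, e_j`, so for the
symmetric matrix `M = Qᵀ A Q` the matrix `Gᵀ M G` has the diagonal of `M` except at `i` and `j`,
where the entries are `(p + q)/2 ± ((p - q)/2 · cos 2θ + r · sin 2θ)` with `p = M i i`,
`q = M j j`, `r = M i j`. Squaring doubles the frequency, so `h θ = K + B cos 4θ + C sin 4θ`,
whence `h'(0) = 4C` and `h''(0) = -16B`. With `θ = arctan x` both `cos 4θ` and `sin 4θ` are rational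
functions of `x` with denominator `(1 + x²)²`, and the two identities are rational-function
identities. -/

section ConjugateDiagonal

variable {ι R : Type*} [Fintype ι] [NonUnitalNonAssocSemiring R]

theorem Matrix.transpose_mul_mul_apply_self_of_col_supported {P M : Matrix ι ι R} {s a b : ι}
    (hab : a ≠ b) (hP : ∀ k, k ≠ a ∧ k ≠ b → P k s = 0) :
    (Pᵀ * M * P) s s =
      (P a s * M a a + P b s * M b a) * P a s + (P a s * M a b + P b s * M b b) * P b s := by
  have hrow : ∀ l, (Pᵀ * M) s l = P a s * M a l + P b s * M b l := fun l => by
    rw [mul_apply]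
    exact Fintype.sum_eq_add a b hab fun k hk => by simp [hP k hk]
  rw [mul_apply, Fintype.sum_eq_add a b hab fun l hl => by simp [hP l hl], hrow, hrow]

end ConjugateDiagonal

noncomputable def harmonic4 (K B C θ : ℝ) : ℝ := K + B * cos (4 * θ) + C * sin (4 * θ)

theorem sum_harmonic4 {κ : Type*} (t : Finset κ) (K B C : κ → ℝ) (θ : ℝ) :
    ∑ ℓ ∈ t, harmonic4 (K ℓ) (B ℓ) (C ℓ) θ =
      harmonic4 (∑ ℓ ∈ t, K ℓ) (∑ ℓ ∈ t, B ℓ) (∑ ℓ ∈ t, C ℓ) θ := by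
  simp only [harmonic4, Finset.sum_add_distrib, Finset.sum_mul]

theorem rotated_diag_sq_add_sq (p q r θ : ℝ) :
    (cos θ ^ 2 * p + 2 * cos θ * sin θ * r + sin θ ^ 2 * q) ^ 2
      + (sin θ ^ 2 * p - 2 * cos θ * sin θ * r + cos θ ^ 2 * q) ^ 2 =
      p ^ 2 + q ^ 2 + harmonic4 (r ^ 2 - ((p - q) / 2) ^ 2) (((p - q) / 2) ^ 2 - r ^ 2)
        ((p - q) * r) θ := by
  have hi : cos θ ^ 2 * p + 2 * cos θ * sin θ * r + sin θ ^ 2 * q =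
      (p + q) / 2 + ((p - q) / 2 * cos (2 * θ) + r * sin (2 * θ)) := by
    rw [cos_two_mul, sin_two_mul]
    linear_combination q * sin_sq_add_cos_sq θ
  have hj : sin θ ^ 2 * p - 2 * cos θ * sin θ * r + cos θ ^ 2 * q =
      (p + q) / 2 - ((p - q) / 2 * cos (2 * θ) + r * sin (2 * θ)) := by
    rw [cos_two_mul, sin_two_mul]
    linear_combination p * sin_sq_add_cos_sq θ
  rw [hi, hj, harmonic4, show 4 * θ = 2 * (2 * θ) by ring, cos_two_mul (2 * θ),
    sin_two_mul (2 * θ)]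
  linear_combination (2 * r ^ 2) * sin_sq_add_cos_sq (2 * θ)

section Givens

variable {n : ℕ} {i j : Fin n} (θ : ℝ)

theorem givens_apply_of_not_block {k l : Fin n} (h : k ≠ i ∧ k ≠ j ∨ l ≠ i ∧ l ≠ j) :
    givens i j θ k l = (1 : Matrix (Fin n) (Fin n) ℝ) k l := by
  rcases h with ⟨hki, hkj⟩ | ⟨hli, hlj⟩ <;> simp [givens, one_apply, *]

theorem givens_apply_left_left : givens i j θ i i = cos θ := by
  simp [givens]

theorem givens_apply_right_right (hij : i ≠ j) : givens i j θ j j = cos θ := by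
  simp [givens, hij.symm]

theorem givens_apply_right_left (hij : i ≠ j) : givens i j θ j i = sin θ := by
  simp [givens, hij, hij.symm]

theorem givens_apply_left_right (hij : i ≠ j) : givens i j θ i j = -sin θ := by
  simp [givens, hij, hij.symm]

theorem givens_conj_apply_left (hij : i ≠ j) {M : Matrix (Fin n) (Fin n) ℝ} (hM : M.IsSymm) :
    ((givens i j θ)ᵀ * M * givens i j θ) i i =
      cos θ ^ 2 * M i i + 2 * cos θ * sin θ * M i j + sin θ ^ 2 * M j j := by
  have hcol : ∀ k, k ≠ i ∧ k ≠ j → givens i j θ k i = 0 := fun k hk => by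
    rw [givens_apply_of_not_block θ (Or.inl hk), one_apply_ne hk.1]
  rw [transpose_mul_mul_apply_self_of_col_supported hij hcol, givens_apply_left_left,
    givens_apply_right_left θ hij, hM.apply i j]
  ring

theorem givens_conj_apply_right (hij : i ≠ j) {M : Matrix (Fin n) (Fin n) ℝ} (hM : M.IsSymm) :
    ((givens i j θ)ᵀ * M * givens i j θ) j j =
      sin θ ^ 2 * M i i - 2 * cos θ * sin θ * M i j + cos θ ^ 2 * M j j := by
  have hcol : ∀ k, k ≠ i ∧ k ≠ j → givens i j θ k j = 0 := fun k hk => by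
    rw [givens_apply_of_not_block θ (Or.inl hk), one_apply_ne hk.2]
  rw [transpose_mul_mul_apply_self_of_col_supported hij hcol, givens_apply_left_right θ hij,
    givens_apply_right_right θ hij, hM.apply i j]
  ring

theorem givens_conj_apply_of_ne {s : Fin n} (hsi : s ≠ i) (hsj : s ≠ j)
    (M : Matrix (Fin n) (Fin n) ℝ) : ((givens i j θ)ᵀ * M * givens i j θ) s s = M s s := by
  have hcol : ∀ k, givens i j θ k s = (1 : Matrix (Fin n) (Fin n) ℝ) k s :=
    fun k => givens_apply_of_not_block θ (Or.inr ⟨hsi, hsj⟩)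
  rw [transpose_mul_mul_apply_self_of_col_supported hsi fun k hk => by
    rw [hcol, one_apply_ne hk.1]]
  simp [hcol, one_apply, hsi.symm]

theorem sum_sq_givens_conj_diag (hij : i ≠ j) {M : Matrix (Fin n) (Fin n) ℝ} (hM : M.IsSymm) :
    ∑ s, ((givens i j θ)ᵀ * M * givens i j θ) s s ^ 2 =
      harmonic4 (∑ s, M s s ^ 2 + M i j ^ 2 - ((M i i - M j j) / 2) ^ 2)
        (((M i i - M j j) / 2) ^ 2 - M i j ^ 2) ((M i i - M j j) * M i j) θ := by
  have hsplit := Fintype.sum_eq_add i j hij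
    (f := fun s => ((givens i j θ)ᵀ * M * givens i j θ) s s ^ 2 - M s s ^ 2)
    fun s hs => by simp only [givens_conj_apply_of_ne θ hs.1 hs.2, sub_self]
  rw [Finset.sum_sub_distrib, givens_conj_apply_left θ hij hM,
    givens_conj_apply_right θ hij hM] at hsplit
  have hrot := rotated_diag_sq_add_sq (M i i) (M j j) (M i j) θ
  simp only [harmonic4] at hrot ⊢
  linarith

theorem exists_harmonic4_eq_sum_sq_givens_conj_diag {κ : Type*} [Fintype κ] (hij : i ≠ j)
    {M : κ → Matrix (Fin n) (Fin n) ℝ} (hM : ∀ ℓ, (M ℓ).IsSymm) :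
    ∃ K B C : ℝ, ∀ θ, ∑ ℓ, ∑ s, ((givens i j θ)ᵀ * M ℓ * givens i j θ) s s ^ 2 =
      harmonic4 K B C θ :=
  ⟨_, _, _, fun θ => by
    simp_rw [sum_sq_givens_conj_diag θ hij (hM _)]
    exact sum_harmonic4 ..⟩

end Givens

theorem hasDerivAt_harmonic4 (K B C θ : ℝ) :
    HasDerivAt (harmonic4 K B C) (harmonic4 0 (4 * C) (-4 * B) θ) θ := by
  have h4 : HasDerivAt (fun t : ℝ => 4 * t) 4 θ := by
    simpa using (hasDerivAt_id θ).const_mul (4 : ℝ)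
  have hcos := ((hasDerivAt_cos (4 * θ)).comp θ h4).const_mul B
  have hsin := ((hasDerivAt_sin (4 * θ)).comp θ h4).const_mul C
  exact (hcos.const_add K |>.add hsin).congr_deriv (by simp only [harmonic4]; ring)

theorem deriv_harmonic4 (K B C : ℝ) : deriv (harmonic4 K B C) = harmonic4 0 (4 * C) (-4 * B) :=
  funext fun θ => (hasDerivAt_harmonic4 K B C θ).deriv

theorem harmonic4_zero (K B C : ℝ) : harmonic4 K B C 0 = K + B := by
  simp [harmonic4]

theorem cos_two_mul_arctan (x : ℝ) : cos (2 * arctan x) = (1 - x ^ 2) / (1 + x ^ 2) := by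
  rw [cos_two_mul, cos_sq_arctan]
  field_simp
  ring

theorem sin_two_mul_arctan (x : ℝ) : sin (2 * arctan x) = 2 * x / (1 + x ^ 2) := by
  rw [sin_two_mul, ← tan_mul_cos (cos_arctan_pos x).ne', tan_arctan]
  linear_combination (2 * x) * cos_sq_arctan x

theorem harmonic4_arctan (K B C x : ℝ) :
    harmonic4 K B C (arctan x) =
      K + (B * (1 - 6 * x ^ 2 + x ^ 4) + C * (4 * x - 4 * x ^ 3)) / (1 + x ^ 2) ^ 2 := by
  have hx : (1 : ℝ) + x ^ 2 ≠ 0 := by positivity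
  rw [harmonic4, show 4 * arctan x = 2 * (2 * arctan x) by ring, cos_two_mul, sin_two_mul,
    cos_two_mul_arctan, sin_two_mul_arctan]
  field_simp
  ring

theorem stmt_9_general {n m : ℕ} (A : Fin m → Matrix (Fin n) (Fin n) ℝ)
    (hA : ∀ ℓ, (A ℓ)ᵀ = A ℓ)
    (Q : Matrix (Fin n) (Fin n) ℝ)
    (i j : Fin n) (hij : i < j)
    (h : ℝ → ℝ)
    (hh : ∀ θ, h θ = ∑ ℓ : Fin m, ∑ s,
      (((Q * givens i j θ)ᵀ * A ℓ * (Q * givens i j θ)) s s) ^ 2)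
    (τ : ℝ → ℝ) (hτ : ∀ x, τ x = h (Real.arctan x)) (x : ℝ) :
    τ x - τ 0 =
      (deriv h 0 * (x - x ^ 3) + (1 / 2) * deriv (deriv h) 0 * x ^ 2) / (1 + x ^ 2) ^ 2 ∧
    deriv τ x =
      (deriv h 0 * (1 - 6 * x ^ 2 + x ^ 4) + deriv (deriv h) 0 * (x - x ^ 3)) / (1 + x ^ 2) ^ 3 := by
  obtain ⟨K, B, C, hKBC⟩ := exists_harmonic4_eq_sum_sq_givens_conj_diag hij.ne
    (M := fun ℓ => Qᵀ * A ℓ * Q) fun ℓ => by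
      simp [IsSymm, transpose_mul, hA, Matrix.mul_assoc]
  have hh' : h = harmonic4 K B C := funext fun θ => by
    simp [hh, ← hKBC, transpose_mul, Matrix.mul_assoc]
  have hτ' : τ = harmonic4 K B C ∘ arctan := funext fun x => by rw [hτ, hh']; rfl
  subst hh' hτ'
  have hd1 : deriv (harmonic4 K B C) 0 = 4 * C := by simp [deriv_harmonic4, harmonic4]
  have hd2 : deriv (deriv (harmonic4 K B C)) 0 = -16 * B := by
    rw [deriv_harmonic4, deriv_harmonic4, harmonic4]
    simp only [mul_zero, cos_zero, sin_zero]
    ring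
  have hx : (1 : ℝ) + x ^ 2 ≠ 0 := by positivity
  refine ⟨?_, ?_⟩
  · rw [Function.comp_apply, Function.comp_apply, harmonic4_arctan, arctan_zero, harmonic4_zero,
      hd1, hd2]
    field_simp
    ring
  · rw [((hasDerivAt_harmonic4 K B C _).comp x (hasDerivAt_arctan x)).deriv, harmonic4_arctan,
      hd1, hd2]
    field_simp
    ring

theorem stmt_9 {n m : ℕ} (hn : 2 ≤ n) (A : Fin m → Matrix (Fin n) (Fin n) ℝ)
    (hA : ∀ ℓ, (A ℓ)ᵀ = A ℓ)
    (Q : Matrix (Fin n) (Fin n) ℝ) (hQ : Q ∈ SOn n)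
    (i j : Fin n) (hij : i < j)
    (h : ℝ → ℝ)
    (hh : ∀ θ, h θ = ∑ ℓ : Fin m, ∑ s,
      (((Q * givens i j θ)ᵀ * A ℓ * (Q * givens i j θ)) s s) ^ 2)
    (τ : ℝ → ℝ) (hτ : ∀ x, τ x = h (Real.arctan x)) (x : ℝ) :
    τ x - τ 0 =
      (deriv h 0 * (x - x ^ 3) + (1 / 2) * deriv (deriv h) 0 * x ^ 2) / (1 + x ^ 2) ^ 2 ∧
    deriv τ x =
      (deriv h 0 * (1 - 6 * x ^ 2 + x ^ 4) + deriv (deriv h) 0 * (x - x ^ 3)) / (1 + x ^ 2) ^ 3 :=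
  stmt_9_general A hA Q i j hij h hh τ hτ x
end

section
/- Let A, B ∈ ℝ and let τ : ℝ → ℝ be the function τ(x) = C + [A(x − x³) + (1/2) B x²] / (1 + x²)² for some constant C ∈ ℝ. If x* ∈ (−1, 1), x* ≠ 0, and τ'(x*) = 0, then τ(x*) − τ(0) = A x* / (2 (1 − x*²)). -/
open Matrix Real Filter Set

attribute [local instance] Matrix.frobeniusNormedAddCommGroup Matrix.frobeniusNormedSpace

/-!
Writing τ = C + p / q² with q = 1 + x², the quotient rule gives
τ' = (1 + x²)⁻³ · (A (1 - 6x² + x⁴) + B x (1 - x²)).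
At a critical point with x² ≠ 1 this expresses B x through A, and substituting into p
collapses p to A x (1 + x²)² / (2 (1 - x²)), cancelling the denominator q².
-/

noncomputable def tauFn (A B C x : ℝ) : ℝ :=
  C + (A * (x - x ^ 3) + (1 / 2) * B * x ^ 2) / (1 + x ^ 2) ^ 2

theorem hasDerivAt_tauFn (A B C x : ℝ) :
    HasDerivAt (tauFn A B C)
      ((A * (1 - 6 * x ^ 2 + x ^ 4) + B * x * (1 - x ^ 2)) / (1 + x ^ 2) ^ 3) x := by
  have hq : HasDerivAt (fun y : ℝ => (1 + y ^ 2) ^ 2) (2 * (1 + x ^ 2) ^ 1 * (2 * x ^ 1)) x :=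
    ((hasDerivAt_pow 2 x).const_add 1).pow 2
  have hp : HasDerivAt (fun y : ℝ => A * (y - y ^ 3) + (1 / 2) * B * y ^ 2)
      (A * (1 - 3 * x ^ 2) + B * x) x :=
    ((((hasDerivAt_id x).sub (hasDerivAt_pow 3 x)).const_mul A).add
      ((hasDerivAt_pow 2 x).const_mul ((1 / 2) * B))).congr_deriv (by ring)
  have hD : (1 + x ^ 2 : ℝ) ≠ 0 := by positivity
  refine ((hp.div hq (pow_ne_zero 2 hD)).const_add C).congr_deriv ?_
  field_simp
  ring

theorem tauFn_crit_iff {A B C x : ℝ} :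
    deriv (tauFn A B C) x = 0 ↔ A * (1 - 6 * x ^ 2 + x ^ 4) + B * x * (1 - x ^ 2) = 0 := by
  rw [(hasDerivAt_tauFn A B C x).deriv, div_eq_zero_iff, or_iff_left (by positivity)]

theorem tauFn_sub_tauFn_zero_of_crit {A B C x : ℝ} (hx : 1 - x ^ 2 ≠ 0)
    (hcrit : A * (1 - 6 * x ^ 2 + x ^ 4) + B * x * (1 - x ^ 2) = 0) :
    tauFn A B C x - tauFn A B C 0 = A * x / (2 * (1 - x ^ 2)) := by
  have hD : (1 + x ^ 2 : ℝ) ≠ 0 := by positivity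
  simp only [tauFn]
  field_simp
  linear_combination x * hcrit

theorem stmt_10_general (A B C : ℝ) (τ : ℝ → ℝ)
    (hτ : ∀ x : ℝ, τ x = C + (A * (x - x ^ 3) + (1 / 2) * B * x ^ 2) / (1 + x ^ 2) ^ 2)
    (x : ℝ) (hx1 : x ∈ Set.Ioo (-1 : ℝ) 1) (hcrit : deriv τ x = 0) :
    τ x - τ 0 = A * x / (2 * (1 - x ^ 2)) := by
  obtain rfl : τ = tauFn A B C := funext hτ
  have hx : 1 - x ^ 2 ≠ 0 := by
    obtain ⟨h₁, h₂⟩ := hx1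
    nlinarith
  exact tauFn_sub_tauFn_zero_of_crit hx (tauFn_crit_iff.mp hcrit)

theorem stmt_10 (A B C : ℝ) (τ : ℝ → ℝ)
    (hτ : ∀ x : ℝ, τ x = C + (A * (x - x ^ 3) + (1 / 2) * B * x ^ 2) / (1 + x ^ 2) ^ 2)
    (x : ℝ) (hx1 : x ∈ Set.Ioo (-1 : ℝ) 1) (hx0 : x ≠ 0) (hcrit : deriv τ x = 0) :
    τ x - τ 0 = A * x / (2 * (1 - x ^ 2)) :=
  stmt_10_general A B C τ hτ x hx1 hcrit
end

section
/- Let n ≥ 1, d ≥ 1, and let A : (Fin d → Fin n) → ℝ be a symmetric d-th order tensor, i.e., A(p ∘ σ) = A(p) for every p : Fin d → Fin n and every permutation σ of Fin d. For a real n×n matrix Q, define W(Q)(i₁,…,i_d) := Σ_{p₁,…,p_d} A(p₁,…,p_d) Q_{p₁ i₁} ⋯ Q_{p_d i_d} and f(Q) := Σ_{j=1}^n (W(Q)(j,…,j))². Then for every Q and every pair of indices (i,j), the partial derivative of f with respect to the (i,j) entry of Q equals 2d · W(Q)(j,…,j) · V(Q)(i, j, …, j), where V(Q)(i, j, …, j)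 := Σ_{p₂,…,p_d} A(i, p₂, …, p_d) Q_{p₂ j} ⋯ Q_{p_d j}. -/
/-!
Along the line `Q + t • single i j 1` only column `j` of `Q` moves, by `t • e_i`. The derivative
of the degree-`(d+1)` form `x ↦ A(x, …, x)` in a direction `y` is a sum over the `d + 1` slots
of `A` with `y` placed in that slot; by symmetry of `A` every slot contributes `A(y, x, …, x)`, so
the derivative is `(d + 1) A(y, x, …, x)`, and for `y = e_i`, `x = Q e_j` this is
`(d + 1) V(i, j, …, j)`.
The chain rule for the square supplies the factor `2 W(j, …, j)`.
-/

open Matrix Real Filter Set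

attribute [local instance] Matrix.frobeniusNormedAddCommGroup Matrix.frobeniusNormedSpace

open Finset

section SymmetricTensor

variable {ι : Type*} [Fintype ι] {d : ℕ}

def IsSymmetricTensor (A : (Fin d → ι) → ℝ) : Prop :=
  ∀ (p : Fin d → ι) (σ : Equiv.Perm (Fin d)), A (p ∘ σ) = A p

noncomputable def tensorForm (A : (Fin d → ι) → ℝ) (x : ι → ℝ) : ℝ :=
  ∑ p, A p * ∏ k, x (p k)

lemma hasDerivAt_prod_add_mul {κ : Type*} [DecidableEq κ] (s : Finset κ) (a b : κ → ℝ) :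
    HasDerivAt (fun t => ∏ k ∈ s, (a k + t * b k))
      (∑ k ∈ s, (∏ m ∈ s.erase k, a m) * b k) 0 := by
  simpa using HasDerivAt.fun_finsetProd (u := s) (x := 0)
    fun k _ => (hasDerivAt_mul_const (b k)).const_add (a k)

lemma hasDerivAt_tensorForm_add_smul (A : (Fin d → ι) → ℝ) (x y : ι → ℝ) :
    HasDerivAt (fun t : ℝ => tensorForm A (x + t • y))
      (∑ p, A p * ∑ k, (∏ m ∈ univ.erase k, x (p m)) * y (p k)) 0 := by
  unfold tensorForm
  simp only [Pi.add_apply, Pi.smul_apply, smul_eq_mul]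
  exact HasDerivAt.fun_sum fun p _ => (hasDerivAt_prod_add_mul _ _ _).const_mul (A p)

lemma prod_univ_erase_zero {M : Type*} [CommMonoid M] (g : Fin (d + 1) → M) :
    ∏ m ∈ univ.erase 0, g m = ∏ m : Fin d, g m.succ := by
  rw [← compl_singleton, ← Fin.image_succ_univ,
    prod_image fun _ _ _ _ h => Fin.succ_injective _ h]

lemma IsSymmetricTensor.sum_mul_prod_erase_eq {A : (Fin (d + 1) → ι) → ℝ}
    (hA : IsSymmetricTensor A) (x y : ι → ℝ) (k : Fin (d + 1)) :
    ∑ p, A p * ((∏ m ∈ univ.erase k, x (p m)) * y (p k)) =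
      ∑ p, A p * ((∏ m ∈ univ.erase 0, x (p m)) * y (p 0)) := by
  set τ := Equiv.swap (0 : Fin (d + 1)) k
  refine Fintype.sum_equiv (τ.arrowCongr (Equiv.refl ι)) _ _ fun p => ?_
  have hprod : ∏ m ∈ univ.erase k, x (p m) = ∏ m ∈ univ.erase 0, x (p (τ m)) :=
    prod_equiv τ (by simp [τ, Equiv.swap_apply_eq_iff]) (by simp [τ])
  have hcomp : τ.arrowCongr (Equiv.refl ι) p = p ∘ τ := by
    ext m
    simp [τ, Equiv.arrowCongr_apply]
  rw [hcomp, hA, hprod]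
  simp [τ]

lemma sum_mul_prod_erase_zero (A : (Fin (d + 1) → ι) → ℝ) (x y : ι → ℝ) :
    ∑ p, A p * ((∏ m ∈ univ.erase 0, x (p m)) * y (p 0)) =
      ∑ a, y a * tensorForm (fun r => A (Fin.cons a r)) x := by
  rw [← (Fin.consEquiv fun _ => ι).sum_comp, Fintype.sum_prod_type]
  refine sum_congr rfl fun a _ => ?_
  simp only [tensorForm, mul_sum, prod_univ_erase_zero]
  refine sum_congr rfl fun r _ => ?_
  simp only [Fin.consEquiv, Equiv.coe_fn_mk, Fin.cons_succ, Fin.cons_zero]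
  ring

lemma hasDerivAt_tensorForm_add_smul_of_isSymmetric {A : (Fin (d + 1) → ι) → ℝ}
    (hA : IsSymmetricTensor A) (x y : ι → ℝ) :
    HasDerivAt (fun t : ℝ => tensorForm A (x + t • y))
      ((d + 1) * ∑ a, y a * tensorForm (fun r => A (Fin.cons a r)) x) 0 := by
  convert hasDerivAt_tensorForm_add_smul A x y using 1
  conv_rhs => simp only [mul_sum]
  rw [sum_comm, sum_congr rfl fun k _ => hA.sum_mul_prod_erase_eq x y k, sum_const, card_univ,
    Fintype.card_fin, sum_mul_prod_erase_zero, nsmul_eq_mul, Nat.cast_succ]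

end SymmetricTensor

theorem stmt_14_general {n d : ℕ} (A : (Fin (d + 1) → Fin n) → ℝ)
    (hsym : ∀ (p : Fin (d + 1) → Fin n) (σ : Equiv.Perm (Fin (d + 1))), A (p ∘ σ) = A p)
    (f : Matrix (Fin n) (Fin n) ℝ → ℝ)
    (hf : ∀ Q, f Q = ∑ j, (∑ p : Fin (d + 1) → Fin n, A p * ∏ k, Q (p k) j) ^ 2)
    (Q : Matrix (Fin n) (Fin n) ℝ) (i j : Fin n) :
    deriv (fun t : ℝ => f (Q + t • Matrix.single i j 1)) 0 =
      2 * ((d : ℝ) + 1) * (∑ p : Fin (d + 1) → Fin n, A p * ∏ k, Q (p k) j) *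
        (∑ p : Fin d → Fin n, A (Fin.cons i p) * ∏ k, Q (p k) j) := by
  set E : Matrix (Fin n) (Fin n) ℝ := Matrix.single i j 1
  have hcols : (fun t : ℝ => f (Q + t • E)) =
      fun t => ∑ j', tensorForm A (Qᵀ j' + t • Eᵀ j') ^ 2 := by
    funext t
    rw [hf]
    rfl
  have hderiv := HasDerivAt.fun_sum (u := univ) fun j' _ =>
    (hasDerivAt_tensorForm_add_smul_of_isSymmetric hsym (Qᵀ j') (Eᵀ j')).fun_pow 2
  rw [hcols, hderiv.deriv]
  simp only [E, tensorForm, transpose_single, transpose_apply, single_apply, ite_and, zero_smul,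
    Pi.add_apply, Pi.zero_apply, add_zero, Nat.add_one_sub_one, pow_one, Nat.cast_ofNat, ite_mul,
    one_mul, zero_mul, mul_ite, mul_zero, sum_ite_eq, Finset.mem_univ, if_true]
  ring

theorem stmt_14 {n d : ℕ} (hn : 1 ≤ n) (A : (Fin (d + 1) → Fin n) → ℝ)
    (hsym : ∀ (p : Fin (d + 1) → Fin n) (σ : Equiv.Perm (Fin (d + 1))), A (p ∘ σ) = A p)
    (f : Matrix (Fin n) (Fin n) ℝ → ℝ)
    (hf : ∀ Q, f Q = ∑ j, (∑ p : Fin (d + 1) → Fin n, A p * ∏ k, Q (p k) j) ^ 2)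
    (Q : Matrix (Fin n) (Fin n) ℝ) (i j : Fin n) :
    deriv (fun t : ℝ => f (Q + t • Matrix.single i j 1)) 0 =
      2 * ((d : ℝ) + 1) * (∑ p : Fin (d + 1) → Fin n, A p * ∏ k, Q (p k) j) *
        (∑ p : Fin d → Fin n, A (Fin.cons i p) * ∏ k, Q (p k) j) :=
  stmt_14_general A hsym f hf Q i j
end

section
/- Let n ≥ 2, let W ∈ ℝ^{n×n×n} be a symmetric third-order tensor, and let δ₀ ∈ ℝ. Define T(θ)_{abc} := Σ_{p,q,r} W_{pqr} G_{pa} G_{qb} G_{rc} with G = G(1,2,θ), h(θ) := Σ_{j=1}^n T(θ)_{jjj}², and τ̃(x) := h(arctan x) − 2 δ₀ x² / (1 + x²)². Set a := 6 (W_{111} W_{112} − W_{122} W_{222}) and b := 6 (W_{111}² + W_{222}² − 3 W_{112}² − 3 W_{122}² − 2 W_{111} W_{122} − 2 W_{112} W_{222}) + 4 δ₀. Then for all x ∈ ℝ: (1 + x²)⁴ · τ̃'(x) = a (1 − 5x² − 5x⁴ + x⁶) + b (x⁵ − x); moreover, for all x ≠ 0, this quantity equals x² (1 + x²) (a ξ²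 + b ξ − 4a) where ξ = x − 1/x. -/
open Matrix Real Filter Set

attribute [local instance] Matrix.frobeniusNormedAddCommGroup Matrix.frobeniusNormedSpace

/-!
Only the columns `i` and `j` of `G(θ)` move, so `h(θ)` is the constant `Σ_{s ≠ i, j} W_{sss}²` plus
the squares of the binary cubic form `w₀ α³ + 3 w₁ α² β + 3 w₂ α β² + w₃ β³` of `W` evaluated at the
rotated columns `(cos θ, sin θ)` and `(-sin θ, cos θ)`. At `θ = arctan x` these are `(1, x)` and
`(-x, 1)` scaled by `(1 + x²)^(-1/2)`, so by homogeneity `τ̃` is a rational function with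
denominator `(1 + x²)³`, and the claim becomes a polynomial identity after differentiating.
-/

def binaryCubic (w₀ w₁ w₂ w₃ α β : ℝ) : ℝ :=
  w₀ * α ^ 3 + 3 * w₁ * α ^ 2 * β + 3 * w₂ * α * β ^ 2 + w₃ * β ^ 3

section BinaryCubic

variable (w₀ w₁ w₂ w₃ : ℝ)

theorem binaryCubic_mul_mul (t α β : ℝ) :
    binaryCubic w₀ w₁ w₂ w₃ (t * α) (t * β) = t ^ 3 * binaryCubic w₀ w₁ w₂ w₃ α β := by
  unfold binaryCubic; ring

theorem HasDerivAt.binaryCubic {f g : ℝ → ℝ} {f' g' x : ℝ} (hf : HasDerivAt f f' x)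
    (hg : HasDerivAt g g' x) :
    HasDerivAt (fun y => binaryCubic w₀ w₁ w₂ w₃ (f y) (g y))
      (3 * f' * (w₀ * f x ^ 2 + 2 * w₁ * f x * g x + w₂ * g x ^ 2)
        + 3 * g' * (w₁ * f x ^ 2 + 2 * w₂ * f x * g x + w₃ * g x ^ 2)) x := by
  unfold _root_.binaryCubic
  refine ((((hf.fun_pow 3).const_mul w₀).fun_add
    (((hf.fun_pow 2).const_mul (3 * w₁)).fun_mul hg)).fun_add
    ((hf.const_mul (3 * w₂)).fun_mul (hg.fun_pow 2))).fun_add ((hg.fun_pow 3).const_mul w₃)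
    |>.congr_deriv ?_
  push_cast
  ring

theorem sq_binaryCubic_div_sqrt (α β x : ℝ) :
    binaryCubic w₀ w₁ w₂ w₃ (α / √(1 + x ^ 2)) (β / √(1 + x ^ 2)) ^ 2
      = binaryCubic w₀ w₁ w₂ w₃ α β ^ 2 / (1 + x ^ 2) ^ 3 := by
  have hsq : √(1 + x ^ 2) ^ 2 = 1 + x ^ 2 := Real.sq_sqrt (by positivity)
  rw [div_eq_inv_mul, div_eq_inv_mul, binaryCubic_mul_mul, mul_pow, ← pow_mul, mul_comm 3 2,
    pow_mul, inv_pow, hsq, inv_pow, inv_mul_eq_div]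

end BinaryCubic

theorem one_add_sq_pow_four_mul_deriv (w₀ w₁ w₂ w₃ δ₀ C x : ℝ) :
    (1 + x ^ 2) ^ 4 * deriv (fun y =>
        (binaryCubic w₀ w₁ w₂ w₃ 1 y ^ 2 + binaryCubic w₀ w₁ w₂ w₃ (-y) 1 ^ 2) / (1 + y ^ 2) ^ 3
          + C - 2 * δ₀ * y ^ 2 / (1 + y ^ 2) ^ 2) x
      = 6 * (w₀ * w₁ - w₂ * w₃) * (1 - 5 * x ^ 2 - 5 * x ^ 4 + x ^ 6)
        + (6 * (w₀ ^ 2 + w₃ ^ 2 - 3 * w₁ ^ 2 - 3 * w₂ ^ 2 - 2 * w₀ * w₂ - 2 * w₁ * w₃) + 4 * δ₀)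
          * (x ^ 5 - x) := by
  have hu : HasDerivAt (fun y : ℝ => 1 + y ^ 2) (2 * x) x := by
    simpa using (hasDerivAt_pow 2 x).const_add 1
  have hP := (hasDerivAt_const x (1 : ℝ)).binaryCubic w₀ w₁ w₂ w₃ (hasDerivAt_id' x)
  have hQ := (hasDerivAt_id' x).fun_neg.binaryCubic w₀ w₁ w₂ w₃ (hasDerivAt_const x (1 : ℝ))
  have hd := ((((hP.fun_pow 2).fun_add (hQ.fun_pow 2)).fun_div (hu.fun_pow 3)
    (by positivity)).add_const C).fun_sub
    (((hasDerivAt_pow 2 x).const_mul (2 * δ₀)).fun_div (hu.fun_pow 2) (by positivity))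
  rw [hd.deriv]
  unfold binaryCubic
  field_simp
  ring

section Givens

variable {n : ℕ} {i j : Fin n}

theorem givens_apply_left (hij : i ≠ j) (θ : ℝ) (p : Fin n) :
    givens i j θ p i
      = Real.cos θ * (if p = i then 1 else 0) + Real.sin θ * (if p = j then 1 else 0) := by
  by_cases hpi : p = i
  · subst hpi; simp [givens, hij]
  · by_cases hpj : p = j
    · subst hpj; simp [givens, hij, hij.symm]
    · simp [givens, hpi, hpj]

theorem givens_apply_right (hij : i ≠ j) (θ : ℝ) (p : Fin n) :
    givens i j θ p j
      = -Real.sin θ * (if p = i then 1 else 0) + Real.cos θ * (if p = j then 1 else 0) := by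
  by_cases hpi : p = i
  · subst hpi; simp [givens, hij, hij.symm]
  · by_cases hpj : p = j
    · subst hpj; simp [givens, hij.symm]
    · simp [givens, hpi, hpj]

theorem givens_apply_of_ne {s : Fin n} (hsi : s ≠ i) (hsj : s ≠ j) (θ : ℝ) (p : Fin n) :
    givens i j θ p s = if p = s then 1 else 0 := by
  simp [givens, hsi, hsj]

end Givens

section SymmetricTensor

variable {n : ℕ} (W : Fin n → Fin n → Fin n → ℝ)

theorem sum_cubic_single_eq (s : Fin n) :
    ∑ p, ∑ q, ∑ r, W p q r * (if p = s then 1 else 0) * (if q = s then 1 else 0)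
      * (if r = s then 1 else 0) = W s s s := by
  simp

theorem sum_cubic_eq_binaryCubic (hsym1 : ∀ p q r, W p q r = W q p r)
    (hsym2 : ∀ p q r, W p q r = W p r q) (i j : Fin n) (α β : ℝ) :
    ∑ p, ∑ q, ∑ r, W p q r * (α * (if p = i then 1 else 0) + β * (if p = j then 1 else 0))
      * (α * (if q = i then 1 else 0) + β * (if q = j then 1 else 0))
      * (α * (if r = i then 1 else 0) + β * (if r = j then 1 else 0))
      = binaryCubic (W i i i) (W i i j) (W i j j) (W j j j) α β := by
  simp only [mul_add, add_mul, mul_ite, ite_mul, mul_one, mul_zero, zero_mul,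
    Finset.sum_add_distrib, Finset.sum_ite_eq', Finset.mem_univ, if_true]
  rw [hsym2 i j i, hsym1 j i i, hsym2 i j i, hsym1 j i j, hsym2 j j i, hsym1 j i j]
  unfold binaryCubic
  ring

theorem sum_sq_givens_cube (hsym1 : ∀ p q r, W p q r = W q p r)
    (hsym2 : ∀ p q r, W p q r = W p r q) {i j : Fin n} (hij : i ≠ j) (θ : ℝ) :
    ∑ s, (∑ p, ∑ q, ∑ r, W p q r * givens i j θ p s * givens i j θ q s * givens i j θ r s) ^ 2
      = binaryCubic (W i i i) (W i i j) (W i j j) (W j j j) (Real.cos θ) (Real.sin θ) ^ 2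
        + binaryCubic (W i i i) (W i i j) (W i j j) (W j j j) (-Real.sin θ) (Real.cos θ) ^ 2
        + ∑ s ∈ {i, j}ᶜ, W s s s ^ 2 := by
  rw [← Finset.sum_add_sum_compl {i, j}, Finset.sum_pair hij]
  simp only [givens_apply_left hij, givens_apply_right hij,
    sum_cubic_eq_binaryCubic W hsym1 hsym2]
  congr 1
  refine Finset.sum_congr rfl fun s hs => ?_
  obtain ⟨hsi, hsj⟩ : s ≠ i ∧ s ≠ j := by simpa using hs
  simp only [givens_apply_of_ne hsi hsj, sum_cubic_single_eq]

end SymmetricTensor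

theorem sextic_eq_mul_quadratic_sub_inv (a b : ℝ) {x : ℝ} (hx : x ≠ 0) :
    a * (1 - 5 * x ^ 2 - 5 * x ^ 4 + x ^ 6) + b * (x ^ 5 - x) =
      x ^ 2 * (1 + x ^ 2) * (a * (x - 1 / x) ^ 2 + b * (x - 1 / x) - 4 * a) := by
  field_simp
  ring

theorem stmt_17_general {n : ℕ} (W : Fin n → Fin n → Fin n → ℝ)
    (hsym1 : ∀ p q r, W p q r = W q p r) (hsym2 : ∀ p q r, W p q r = W p r q)
    (δ₀ : ℝ)
    (i j : Fin n) (hi : (i : ℕ) = 0) (hj : (j : ℕ) = 1)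
    (h : ℝ → ℝ)
    (hh : ∀ θ, h θ = ∑ s, (∑ p, ∑ q, ∑ r, W p q r *
      givens i j θ p s * givens i j θ q s * givens i j θ r s) ^ 2)
    (τ : ℝ → ℝ)
    (hτ : ∀ x, τ x = h (Real.arctan x) - 2 * δ₀ * x ^ 2 / (1 + x ^ 2) ^ 2)
    (a b : ℝ)
    (ha : a = 6 * (W i i i * W i i j - W i j j * W j j j))
    (hb : b = 6 * ((W i i i) ^ 2 + (W j j j) ^ 2 - 3 * (W i i j) ^ 2 - 3 * (W i j j) ^ 2
      - 2 * W i i i * W i j j - 2 * W i i j * W j j j) + 4 * δ₀) :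
    (∀ x : ℝ, (1 + x ^ 2) ^ 4 * deriv τ x =
      a * (1 - 5 * x ^ 2 - 5 * x ^ 4 + x ^ 6) + b * (x ^ 5 - x)) ∧
    (∀ x : ℝ, x ≠ 0 →
      a * (1 - 5 * x ^ 2 - 5 * x ^ 4 + x ^ 6) + b * (x ^ 5 - x) =
        x ^ 2 * (1 + x ^ 2) * (a * (x - 1 / x) ^ 2 + b * (x - 1 / x) - 4 * a)) := by
  have hij : i ≠ j := Fin.ne_of_val_ne (by omega)
  have hτ_eq : τ = fun y =>
      (binaryCubic (W i i i) (W i i j) (W i j j) (W j j j) 1 y ^ 2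
        + binaryCubic (W i i i) (W i i j) (W i j j) (W j j j) (-y) 1 ^ 2) / (1 + y ^ 2) ^ 3
      + ∑ s ∈ {i, j}ᶜ, W s s s ^ 2 - 2 * δ₀ * y ^ 2 / (1 + y ^ 2) ^ 2 := by
    funext x
    rw [hτ, hh, sum_sq_givens_cube W hsym1 hsym2 hij, Real.cos_arctan, Real.sin_arctan, ← neg_div,
      sq_binaryCubic_div_sqrt, sq_binaryCubic_div_sqrt, add_div]
  refine ⟨fun x => ?_, fun x hx => sextic_eq_mul_quadratic_sub_inv a b hx⟩
  rw [hτ_eq, one_add_sq_pow_four_mul_deriv, ha, hb]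

theorem stmt_17 {n : ℕ} (hn : 2 ≤ n) (W : Fin n → Fin n → Fin n → ℝ)
    (hsym1 : ∀ p q r, W p q r = W q p r) (hsym2 : ∀ p q r, W p q r = W p r q)
    (δ₀ : ℝ)
    (i j : Fin n) (hi : (i : ℕ) = 0) (hj : (j : ℕ) = 1)
    (h : ℝ → ℝ)
    (hh : ∀ θ, h θ = ∑ s, (∑ p, ∑ q, ∑ r, W p q r *
      givens i j θ p s * givens i j θ q s * givens i j θ r s) ^ 2)
    (τ : ℝ → ℝ)
    (hτ : ∀ x, τ x = h (Real.arctan x) - 2 * δ₀ * x ^ 2 / (1 + x ^ 2) ^ 2)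
    (a b : ℝ)
    (ha : a = 6 * (W i i i * W i i j - W i j j * W j j j))
    (hb : b = 6 * ((W i i i) ^ 2 + (W j j j) ^ 2 - 3 * (W i i j) ^ 2 - 3 * (W i j j) ^ 2
      - 2 * W i i i * W i j j - 2 * W i i j * W j j j) + 4 * δ₀) :
    (∀ x : ℝ, (1 + x ^ 2) ^ 4 * deriv τ x =
      a * (1 - 5 * x ^ 2 - 5 * x ^ 4 + x ^ 6) + b * (x ^ 5 - x)) ∧
    (∀ x : ℝ, x ≠ 0 →
      a * (1 - 5 * x ^ 2 - 5 * x ^ 4 + x ^ 6) + b * (x ^ 5 - x) =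
        x ^ 2 * (1 + x ^ 2) * (a * (x - 1 / x) ^ 2 + b * (x - 1 / x) - 4 * a)) :=
  stmt_17_general W hsym1 hsym2 δ₀ i j hi hj h hh τ hτ a b ha hb
end
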